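/- arXiv:math/0601482 — 3 statements merged into one kernel-verified Lean document; each statement's English description precedes it below -/
import Mathlib

section
/- For each k ≥ 0, the number of elements in the conjugacy class of s₁ in W_(3) whose length is at most 2k+1 is at least 2^k. -/
/-- The Coxeter matrix of the universal Coxeter group `W₍₃₎` on three generators:
all off-diagonal entries are `0`, i.e. `∞`. -/
def M3 : CoxeterMatrix (Fin 3) where
  M := Matrix.of fun i j => if i = j then 1 else 0
  isSymm := by decide
  diagonal := by decide
  off_diagonal := by
    intro i i' h
    simp [Matrix.of_apply, h]

/-- The universal Coxeter group `W₍₃₎ = ℤ/2 * ℤ/2 * ℤ/2`. -/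
abbrev W3 : Type := M3.Group

/-- The canonical Coxeter system on `W₍₃₎`. -/
def cs3 : CoxeterSystem M3 W3 := M3.toCoxeterSystem

/-!
Conjugating `s₀` by `w = s_{i₁} ⋯ s_{iₖ}` gives the word `i₁ ⋯ iₖ 0 iₖ ⋯ i₁` of length `2k + 1`.
When no two adjacent letters of `i₁ ⋯ iₖ 0` are equal, this palindrome has no two equal adjacent
letters either, and in the universal Coxeter group such words are normal forms: distinct ones
represent distinct elements (van der Waerden's trick: the generators act on normal forms by
cancelling or prepending a letter). There are `2 ^ k` choices of `i₁ ⋯ iₖ`, two for each letter.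
-/

namespace List

variable {α : Type*}

theorem IsChain.append_cons_reverse {R : α → α → Prop} [Std.Symm R] {L : List α} {a : α}
    (h : (L ++ [a]).IsChain R) : (L ++ a :: L.reverse).IsChain R := by
  obtain ⟨hL, -, hLa⟩ := isChain_append.1 h
  have haL : (a :: L.reverse).IsChain R := by
    simpa using (isChain_reverse.2 h).imp fun _ _ => symm
  exact hL.append haL hLa

theorem append_cons_reverse_injective (a : α) :
    Function.Injective fun L : List α => L ++ a :: L.reverse := by
  intro L L' h
  have hlen : L.length = L'.length := by
    have := congrArg List.length h
    simp only [length_append, length_cons, length_reverse] at this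
    omega
  exact (append_inj h hlen).1

variable {B : Type*} [DecidableEq B]

/-- Left multiplication by the generator `i` on normal forms of the universal Coxeter group. -/
def cancelOrCons (i : B) : List B → List B
  | [] => [i]
  | a :: t => if a = i then t else i :: a :: t

theorem cancelOrCons_of_isChain_cons {i : B} {L : List B} (h : (i :: L).IsChain (· ≠ ·)) :
    cancelOrCons i L = i :: L := by
  cases L with
  | nil => rfl
  | cons a t => exact if_neg (isChain_cons_cons.1 h).1.symm

theorem IsChain.cancelOrCons {L : List B} (h : L.IsChain (· ≠ ·)) (i : B) :
    (L.cancelOrCons i).IsChain (· ≠ ·) := by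
  cases L with
  | nil => exact .singleton i
  | cons a t =>
    by_cases hai : a = i
    · simpa [List.cancelOrCons, hai] using h.tail
    · simpa [List.cancelOrCons, hai] using h.cons (by simpa using Ne.symm hai)

theorem cancelOrCons_cancelOrCons {L : List B} (h : L.IsChain (· ≠ ·)) (i : B) :
    cancelOrCons i (cancelOrCons i L) = L := by
  cases L with
  | nil => simp [cancelOrCons]
  | cons a t =>
    by_cases hai : a = i
    · subst hai
      simpa [cancelOrCons] using cancelOrCons_of_isChain_cons h
    · simp [cancelOrCons, hai]

end List

/-- The normal forms of the universal Coxeter group on `B`. -/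
abbrev NormalWord (B : Type*) := {L : List B // L.IsChain (· ≠ ·)}

namespace NormalWord

variable {B : Type*} [DecidableEq B]

def simplePerm (i : B) : Equiv.Perm (NormalWord B) :=
  Function.Involutive.toPerm (fun L => ⟨L.1.cancelOrCons i, L.2.cancelOrCons i⟩)
    fun L => Subtype.ext (List.cancelOrCons_cancelOrCons L.2 i)

theorem isLiftable_simplePerm {M : CoxeterMatrix B} (hM : ∀ i j, i ≠ j → M i j = 0) :
    M.IsLiftable (simplePerm (B := B)) := by
  intro i j
  by_cases hij : i = j
  · subst hij
    rw [M.diagonal, pow_one]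
    exact Equiv.ext fun L => (simplePerm i).left_inv L
  · rw [hM i j hij, pow_zero]

end NormalWord

namespace CoxeterSystem

variable {B W : Type*} [Group W] {M : CoxeterMatrix B} (cs : CoxeterSystem M W)

theorem wordProd_injOn_isChain_ne [DecidableEq B] (hM : ∀ i j, i ≠ j → M i j = 0) :
    Set.InjOn cs.wordProd {L | L.IsChain (· ≠ ·)} := by
  let φ := cs.lift ⟨NormalWord.simplePerm, NormalWord.isLiftable_simplePerm hM⟩
  have hφ : ∀ L : List B, L.IsChain (· ≠ ·) → (φ (cs.wordProd L) ⟨[], .nil⟩).1 = L := by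
    intro L hL
    induction L with
    | nil => simp
    | cons i t ih =>
      rw [wordProd_cons, map_mul, Equiv.Perm.mul_apply, lift_apply_simple]
      change (List.cancelOrCons i (φ (cs.wordProd t) ⟨[], .nil⟩).1) = _
      rw [ih hL.tail, List.cancelOrCons_of_isChain_cons hL]
  intro L hL L' hL' h
  rw [← hφ L hL, ← hφ L' hL', h]

theorem finite_setOf_length_le [Finite B] (n : ℕ) : {w : W | cs.length w ≤ n}.Finite := by
  refine ((List.finite_length_le B n).image cs.wordProd).subset fun w hw => ?_
  obtain ⟨ω, hω, rfl⟩ := cs.exists_isReduced w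
  exact ⟨ω, by simpa [hω.eq] using hw, rfl⟩

end CoxeterSystem

/-- Each letter is the `b`-th of the `n` letters different from its right neighbour, so this
enumerates the words over `Fin (n + 1)` with no two equal adjacent letters that do not end in `0`. -/
def succAboveWord {n : ℕ} : List (Fin n) → List (Fin (n + 1))
  | [] => []
  | b :: r => ((succAboveWord r).headD 0).succAbove b :: succAboveWord r

theorem length_succAboveWord {n : ℕ} (r : List (Fin n)) : (succAboveWord r).length = r.length := by
  induction r with
  | nil => rfl
  | cons b r ih => simp [succAboveWord, ih]

theorem succAboveWord_injective {n : ℕ} : Function.Injective (succAboveWord (n := n)) := by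
  intro r r' h
  induction r generalizing r' with
  | nil => cases r' with
    | nil => rfl
    | cons => simp [succAboveWord] at h
  | cons b r ih => cases r' with
    | nil => simp [succAboveWord] at h
    | cons b' r' =>
      obtain ⟨hb, hr⟩ := List.cons.inj h
      obtain rfl := ih hr
      rw [hr, Fin.succAbove_right_inj] at hb
      rw [hb]

theorem isChain_succAboveWord_append_zero {n : ℕ} (r : List (Fin n)) :
    (succAboveWord r ++ [0]).IsChain (· ≠ ·) := by
  induction r with
  | nil => exact .singleton 0
  | cons b r ih =>
    refine List.isChain_cons.2 ⟨fun y hy => ?_, ih⟩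
    obtain rfl : (succAboveWord r).headD 0 = y := by
      simpa [List.headD_eq_head?_getD] using hy
    exact Fin.succAbove_ne _ _

/-- For each `k ≥ 0`, the conjugacy class of `s₁` in the universal Coxeter group
`W₍₃₎` contains at least `2^k` elements of length at most `2k+1`. -/
theorem conjugates_of_s1_of_bounded_length (k : ℕ) :
    2 ^ k ≤ Set.ncard {t : W3 |
      (∃ w : W3, w * cs3.simple 0 * w⁻¹ = t) ∧ cs3.length t ≤ 2 * k + 1} := by
  set T := {t : W3 |
      (∃ w : W3, w * cs3.simple 0 * w⁻¹ = t) ∧ cs3.length t ≤ 2 * k + 1}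
  let word : (Fin k → Fin 2) → List (Fin 3) := fun v =>
    succAboveWord (List.ofFn v) ++ 0 :: (succAboveWord (List.ofFn v)).reverse
  have word_isChain : ∀ v, (word v).IsChain (· ≠ ·) := fun v =>
    (isChain_succAboveWord_append_zero _).append_cons_reverse
  have hword : ∀ v, cs3.wordProd (word v) ∈ T := fun v =>
    ⟨⟨cs3.wordProd (succAboveWord (List.ofFn v)), by
      simp [word, CoxeterSystem.wordProd_append, CoxeterSystem.wordProd_cons, mul_assoc]⟩,
      (cs3.length_wordProd_le _).trans (by simp [word, length_succAboveWord]; omega)⟩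
  have hinj : Function.Injective (cs3.wordProd ∘ word) := fun v v' h =>
    List.ofFn_injective <| succAboveWord_injective <| List.append_cons_reverse_injective 0 <|
      cs3.wordProd_injOn_isChain_ne (fun i j hij => if_neg hij) (word_isChain v)
        (word_isChain v') h
  calc 2 ^ k = (Set.univ : Set (Fin k → Fin 2)).ncard := by simp
    _ ≤ T.ncard := Set.ncard_le_ncard_of_injOn _ (fun v _ => hword v) hinj.injOn
      ((cs3.finite_setOf_length_le _).subset fun _ ht => ht.2)
end

section
/- (Deodhar) Let (W,S) be a Coxeter system, T = ∪_{w∈W} wSw⁻¹ the set of reflections, and J ⊆ S. If t₁, t₂ ∈ T \ W_J with t₁ ≠ t₂, then t₁W_J ≠ t₂W_J; that is, distinct reflections not in W_J lie in distinct left cosets of the parabolic subgroup W_J. -/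
/-!
The argument runs through the reflection cocycle `η(w, x) ∈ {±1}`, obtained by letting `W` act
on `W × {±1}` so that `s` sends `(x, ε)` to `(s x s, -ε)` if `x = s` and to `(s x s, ε)`
otherwise. A generator `s_j` with `j ∈ J` flips the sign only at `s_j`, so `η(u, x) = 1` whenever
`u ∈ W_J` and `x ∉ W_J`. Hence two reflections `x, y` of a coset `w W_J ≠ W_J` satisfy
`η(x, y) = η((x y) y, y) = η(y, y) = -1`.

The reflections of such a coset form a set closed under `(x, y) ↦ x y x` on which `η ≡ -1`, and
such a set has at most one element: if it contains a left descent `s` of one of its members `a`,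
then `η(s, y) = -1` forces every member to be `s`; otherwise conjugating the whole set by `s`
shortens `a` by two.
-/

open scoped Pointwise

namespace CoxeterSystem

open scoped Classical

variable {B W : Type*} [Group W] {M : CoxeterMatrix B} (cs : CoxeterSystem M W)

local prefix:100 "s " => cs.simple
local prefix:100 "π " => cs.wordProd
local prefix:100 "ℓ " => cs.length

theorem simple_mul_mul_simple_eq_iff {i : B} {x y : W} :
    s i * x * s i = y ↔ x = s i * y * s i := by
  constructor <;> rintro rfl <;> simp [mul_assoc]

/-- Acting on `W × ℤˣ` rather than on (reflections) `× ℤˣ` avoids a subtype. -/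
noncomputable def signPerm (i : B) : Equiv.Perm (W × ℤˣ) :=
  Function.Involutive.toPerm (fun p ↦ (s i * p.1 * s i, p.2 * if p.1 = s i then -1 else 1)) <| by
    rintro ⟨x, ε⟩
    have hx : s i * x * s i = s i ↔ x = s i := by
      rw [simple_mul_mul_simple_eq_iff, simple_mul_simple_self, one_mul]
    refine Prod.ext (by simp [mul_assoc]) ?_
    dsimp only
    rw [if_congr hx rfl rfl, mul_assoc, Int.units_mul_self, mul_one]

theorem signPerm_apply (i : B) (x : W) (ε : ℤˣ) :
    cs.signPerm i (x, ε) = (s i * x * s i, ε * if x = s i then -1 else 1) := rfl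

theorem inv_pow_simple_mul_simple_mul_simple (i j : B) (k : ℕ) :
    ((s i * s j) ^ k)⁻¹ * s j = s j * (s i * s j) ^ k := by
  have h : s j * (s i * s j) * (s j)⁻¹ = (s i * s j)⁻¹ := by
    simp [mul_assoc]
  rw [← inv_pow, ← h, conj_pow, inv_simple]
  simp [mul_assoc]

theorem conj_pow_eq_simple_mul_pow_iff (i j : B) (k n : ℕ) (x : W) :
    (s i * s j) ^ k * x * ((s i * s j) ^ k)⁻¹ = s j * (s i * s j) ^ n ↔
      x = s j * (s i * s j) ^ (2 * k + n) := by
  have h : ((s i * s j) ^ k)⁻¹ * (s j * (s i * s j) ^ n) * (s i * s j) ^ k =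
      s j * (s i * s j) ^ (2 * k + n) := by
    rw [← mul_assoc, inv_pow_simple_mul_simple_mul_simple, mul_assoc, mul_assoc, ← pow_add,
      ← pow_add]
    congr 2
    omega
  rw [← h]
  constructor
  · intro hx
    rw [← hx]
    group
  · rintro rfl
    group

theorem signPerm_mul_signPerm_pow_apply (i j : B) (k : ℕ) (x : W) (ε : ℤˣ) :
    ((cs.signPerm i * cs.signPerm j) ^ k) (x, ε) =
      ((s i * s j) ^ k * x * ((s i * s j) ^ k)⁻¹,
        ε * ∏ n ∈ Finset.range (2 * k), if x = s j * (s i * s j) ^ n then -1 else 1) := by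
  induction k with
  | zero => simp
  | succ k ih =>
    have h₀ := cs.conj_pow_eq_simple_mul_pow_iff i j k 0 x
    rw [pow_zero, mul_one, add_zero] at h₀
    have h₁ : s j * ((s i * s j) ^ k * x * ((s i * s j) ^ k)⁻¹) * s j = s i ↔
        x = s j * (s i * s j) ^ (2 * k + 1) := by
      rw [simple_mul_mul_simple_eq_iff, ← cs.conj_pow_eq_simple_mul_pow_iff i j k 1, pow_one,
        mul_assoc (s j)]
    rw [pow_succ', Equiv.Perm.mul_apply, ih, Equiv.Perm.mul_apply, signPerm_apply, signPerm_apply,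
      if_congr h₀ rfl rfl, if_congr h₁ rfl rfl, Nat.mul_succ, Finset.prod_range_succ,
      Finset.prod_range_succ]
    exact Prod.ext (by simp [pow_succ', mul_assoc]) (by simp only [mul_assoc])

theorem isLiftable_signPerm : M.IsLiftable cs.signPerm := by
  intro i j
  -- `n ↦ s j * (s i * s j) ^ n` has period `M i j`, so each sign factor occurs twice.
  ext ⟨x, ε⟩ : 1
  rw [signPerm_mul_signPerm_pow_apply, cs.simple_mul_simple_pow, two_mul, Finset.prod_range_add]
  simp_rw [pow_add, cs.simple_mul_simple_pow, one_mul, Int.units_mul_self]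
  simp

noncomputable def signRep : W →* Equiv.Perm (W × ℤˣ) :=
  cs.lift ⟨cs.signPerm, cs.isLiftable_signPerm⟩

theorem signRep_simple (i : B) : cs.signRep (s i) = cs.signPerm i :=
  cs.lift_apply_simple cs.isLiftable_signPerm i

/-- The reflection cocycle: for a reflection `x`, `rightInvSign w x = -1` iff `x` is a right
inversion of `w`. -/
noncomputable def rightInvSign (w x : W) : ℤˣ := (cs.signRep w (x, 1)).2

theorem signRep_apply (w x : W) (ε : ℤˣ) :
    cs.signRep w (x, ε) = (w * x * w⁻¹, ε * cs.rightInvSign w x) := by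
  induction w using cs.simple_induction_left generalizing x ε with
  | one => simp [rightInvSign]
  | mul_simple_left w i ih =>
    rw [rightInvSign, map_mul, Equiv.Perm.mul_apply, Equiv.Perm.mul_apply, ih, ih, signRep_simple,
      signPerm_apply, signPerm_apply]
    simp [mul_assoc]

theorem rightInvSign_one (x : W) : cs.rightInvSign 1 x = 1 := by
  simp [rightInvSign]

theorem rightInvSign_simple (i : B) (x : W) :
    cs.rightInvSign (s i) x = if x = s i then -1 else 1 := by
  simp [rightInvSign, signRep_simple, signPerm_apply]

theorem rightInvSign_mul (g h x : W) :
    cs.rightInvSign (g * h) x = cs.rightInvSign h x * cs.rightInvSign g (h * x * h⁻¹) := by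
  rw [rightInvSign, map_mul, Equiv.Perm.mul_apply, signRep_apply, signRep_apply, one_mul]

theorem rightInvSign_inv (g x : W) :
    cs.rightInvSign g⁻¹ (g * x * g⁻¹) = cs.rightInvSign g x := by
  have h := cs.rightInvSign_mul g⁻¹ g x
  rw [inv_mul_cancel, rightInvSign_one] at h
  rw [eq_inv_of_mul_eq_one_right h.symm, Int.units_inv_eq_self]

theorem rightInvSign_conj (g x y : W) :
    cs.rightInvSign (g * x * g⁻¹) (g * y * g⁻¹) =
      cs.rightInvSign g y * cs.rightInvSign x y * cs.rightInvSign g (x * y * x⁻¹) := by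
  rw [rightInvSign_mul, rightInvSign_inv, rightInvSign_mul, ← mul_assoc]
  congr 3
  group

/-- That is, `x` occurs in `cs.rightInvSeq ω`. -/
theorem exists_eq_append_of_rightInvSign_eq_neg_one {ω : List B} {x : W}
    (h : cs.rightInvSign (π ω) x = -1) :
    ∃ ω₁ i ω₂, ω = ω₁ ++ i :: ω₂ ∧ x = (π ω₂)⁻¹ * s i * π ω₂ := by
  induction ω with
  | nil => simp [rightInvSign_one] at h
  | cons i ω ih =>
    rw [wordProd_cons, rightInvSign_mul] at h
    rcases Int.units_eq_one_or (cs.rightInvSign (π ω) x) with h₁ | h₁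
    · rw [h₁, one_mul, rightInvSign_simple] at h
      have hx : π ω * x * (π ω)⁻¹ = s i := by
        by_contra hx
        simp [hx] at h
      exact ⟨[], i, ω, rfl, by rw [← hx]; group⟩
    · obtain ⟨ω₁, j, ω₂, rfl, hx⟩ := ih h₁
      exact ⟨i :: ω₁, j, ω₂, rfl, hx⟩

theorem length_mul_simple_mul_inv_le (w : W) (i : B) : ℓ (w * s i * w⁻¹) ≤ 2 * ℓ w + 1 := by
  have h₁ := cs.length_mul_le (w * s i) w⁻¹
  have h₂ := cs.length_mul_le w (s i)
  rw [length_inv, length_simple] at *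
  omega

namespace IsReflection

variable {cs}

theorem rightInvSign_self {t : W} (ht : cs.IsReflection t) : cs.rightInvSign t t = -1 := by
  obtain ⟨w, i, rfl⟩ := ht
  rw [rightInvSign_conj, rightInvSign_simple, if_pos rfl, mul_inv_cancel_right, mul_neg_one,
    neg_mul, Int.units_mul_self]

theorem ne_one {t : W} (ht : cs.IsReflection t) : t ≠ 1 := by
  rintro rfl
  simpa using ht.odd_length

/-- With `t = s i * π ω`, `ω` reduced, the cocycle puts `t = β⁻¹ * s k * β` into the right
inversion sequence of `i :: ω = i :: ω₁ ++ k :: ω₂`, where `β = π ω₂`. Comparing with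
`t = s i * π ω₁ * s k * β` gives `β⁻¹ = s i * π ω₁`, so `s i * t * s i` is the conjugate of
`s k` by the shorter `π ω₁`. -/
theorem length_simple_mul_mul_simple {t : W} (ht : cs.IsReflection t) {i : B}
    (hi : cs.IsLeftDescent t i) (hti : t ≠ s i) : ℓ (s i * t * s i) + 2 = ℓ t := by
  obtain ⟨ω, hω, hst⟩ := cs.exists_isReduced (s i * t)
  have hlen : ℓ (s i * t) = ω.length := by rw [hst, hω.eq]
  have hlen' := cs.length_simple_mul t i
  have ht' : t = s i * π ω := by rw [← hst, simple_mul_simple_cancel_left]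
  have hsign : cs.rightInvSign (π (i :: ω)) t = -1 := by
    rw [wordProd_cons, ← ht']
    exact ht.rightInvSign_self
  obtain ⟨_ | ⟨i', ω₁⟩, k, ω₂, hsplit, htk⟩ :=
    cs.exists_eq_append_of_rightInvSign_eq_neg_one hsign
  · obtain ⟨rfl, rfl⟩ : i = k ∧ ω = ω₂ := by simpa using hsplit
    have key : t = t⁻¹ * s i * t := by
      calc t = (s i * t)⁻¹ * s i * (s i * t) := by rw [hst]; exact htk
        _ = t⁻¹ * s i * t := by group
    refine absurd ?_ hti
    calc t = t * (t⁻¹ * s i * t) * t⁻¹ := by rw [← key]; group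
      _ = s i := by group
  · obtain ⟨rfl, rfl⟩ : i = i' ∧ ω = ω₁ ++ k :: ω₂ := by simpa using hsplit
    have hβ : π ω₂ = (s i * π ω₁)⁻¹ := by
      have h : (π ω₂)⁻¹ * (s k * π ω₂) = s i * π ω₁ * (s k * π ω₂) := by
        rw [← mul_assoc, ← htk, ht', wordProd_append, wordProd_cons, mul_assoc]
      rw [← mul_right_cancel h, inv_inv]
    have hconj : s i * t * s i = π ω₁ * s k * (π ω₁)⁻¹ := by
      rw [htk, hβ, inv_inv]
      simp [mul_assoc]
    have h₁ := cs.length_mul_simple_mul_inv_le (π ω₁) k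
    have h₂ := cs.length_mul_simple_mul_inv_le (π ω₂)⁻¹ k
    rw [inv_inv, length_inv, ← htk] at h₂
    have := cs.length_wordProd_le ω₁
    have := cs.length_wordProd_le ω₂
    have := cs.length_mul_simple (s i * t) i
    rw [← hconj] at h₁
    simp only [IsLeftDescent, List.length_append, List.length_cons] at *
    omega

end IsReflection

theorem subsingleton_of_rightInvSign_eq_neg_one {S : Set W}
    (hrefl : ∀ x ∈ S, cs.IsReflection x) (hclosed : ∀ x ∈ S, ∀ y ∈ S, x * y * x ∈ S)
    (hsign : ∀ x ∈ S, ∀ y ∈ S, cs.rightInvSign x y = -1) : S.Subsingleton := by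
  intro a ha b hb
  induction hn : ℓ a using Nat.strong_induction_on generalizing S a b with
  | _ n ih =>
  obtain ⟨i, hi⟩ := cs.exists_leftDescent_of_ne_one (hrefl a ha).ne_one
  by_cases hiS : s i ∈ S
  · have eq_simple : ∀ x ∈ S, x = s i := fun x hx ↦ by
      by_contra hxi
      simpa [rightInvSign_simple, hxi] using hsign _ hiS x hx
    rw [eq_simple a ha, eq_simple b hb]
  · have hlen := (hrefl a ha).length_simple_mul_mul_simple hi (ne_of_mem_of_not_mem ha hiS)
    set c := MulAut.conj (s i)
    have hc (x : W) : c x = s i * x * s i := by rw [MulAut.conj_apply, inv_simple]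
    refine c.injective (ih _ (by rw [hc]; omega) (S := c '' S) ?_ ?_ ?_
      (Set.mem_image_of_mem c ha) (Set.mem_image_of_mem c hb) rfl)
    · rintro _ ⟨x, hx, rfl⟩
      exact (hrefl x hx).conj _
    · rintro _ ⟨x, hx, rfl⟩ _ ⟨y, hy, rfl⟩
      exact ⟨x * y * x, hclosed x hx y hy, by simp only [map_mul]⟩
    · rintro _ ⟨x, hx, rfl⟩ _ ⟨y, hy, rfl⟩
      rw [MulAut.conj_apply, MulAut.conj_apply, rightInvSign_conj, (hrefl x hx).inv,
        hsign x hx y hy, rightInvSign_simple, rightInvSign_simple,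
        if_neg (ne_of_mem_of_not_mem hy hiS),
        if_neg (ne_of_mem_of_not_mem (hclosed x hx y hy) hiS), one_mul, mul_one]

theorem rightInvSign_eq_one_of_mem_closure {J : Set B} {u x : W}
    (hu : u ∈ Subgroup.closure (cs.simple '' J)) (hx : x ∉ Subgroup.closure (cs.simple '' J)) :
    cs.rightInvSign u x = 1 := by
  have conj_not_mem {g y : W} (hg : g ∈ Subgroup.closure (cs.simple '' J))
      (hy : y ∉ Subgroup.closure (cs.simple '' J)) :
      g * y * g⁻¹ ∉ Subgroup.closure (cs.simple '' J) := by
    rwa [Subgroup.mul_mem_cancel_right _ (inv_mem hg), Subgroup.mul_mem_cancel_left _ hg]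
  induction hu using Subgroup.closure_induction generalizing x with
  | mem _ hg =>
    obtain ⟨j, hj, rfl⟩ := hg
    rw [rightInvSign_simple, if_neg]
    rintro rfl
    exact hx (Subgroup.subset_closure ⟨j, hj, rfl⟩)
  | one => exact cs.rightInvSign_one x
  | mul g h hg hh ihg ihh => rw [rightInvSign_mul, ihh hx, ihg (conj_not_mem hh hx), one_mul]
  | inv g hg ih =>
    have h := cs.rightInvSign_inv g (g⁻¹ * x * g)
    rwa [show g * (g⁻¹ * x * g) * g⁻¹ = x by group,
      ih (by simpa using conj_not_mem (inv_mem hg) hx)] at h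

theorem rightInvSign_eq_neg_one_of_mul_mem {J : Set B} {x y : W} (hy : cs.IsReflection y)
    (hyJ : y ∉ Subgroup.closure (cs.simple '' J))
    (hxy : x * y ∈ Subgroup.closure (cs.simple '' J)) :
    cs.rightInvSign x y = -1 := by
  calc cs.rightInvSign x y = cs.rightInvSign (x * y * y) y := by
        rw [mul_assoc, hy.mul_self, mul_one]
    _ = -1 := by
      rw [rightInvSign_mul, hy.rightInvSign_self, mul_inv_cancel_right,
        cs.rightInvSign_eq_one_of_mem_closure hxy hyJ, mul_one]

theorem subsingleton_isReflection_inter_leftCoset {J : Set B} {w : W}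
    (hw : w ∉ Subgroup.closure (cs.simple '' J)) :
    ({t | cs.IsReflection t} ∩ w • (Subgroup.closure (cs.simple '' J) : Set W)).Subsingleton := by
  set P := Subgroup.closure (cs.simple '' J)
  have mul_mem {x y : W} (hx : cs.IsReflection x) (hxw : x ∈ w • (P : Set W))
      (hyw : y ∈ w • (P : Set W)) : x * y ∈ P := by
    rw [mem_leftCoset_iff] at hxw hyw
    simpa [hx.inv, mul_assoc] using P.mul_mem (P.inv_mem hxw) hyw
  refine cs.subsingleton_of_rightInvSign_eq_neg_one (fun x hx ↦ hx.1) ?_ ?_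
  · rintro x ⟨hx, hxw⟩ y ⟨hy, hyw⟩
    refine ⟨by simpa [hx.inv] using hy.conj x, ?_⟩
    have hyx := mul_mem hy hyw hxw
    rw [mem_leftCoset_iff] at hxw ⊢
    rw [mul_assoc, ← mul_assoc w⁻¹]
    exact P.mul_mem hxw hyx
  · rintro x ⟨hx, hxw⟩ y ⟨hy, hyw⟩
    refine cs.rightInvSign_eq_neg_one_of_mul_mem hy (fun hyP ↦ hw ?_) (mul_mem hx hxw hyw)
    rw [mem_leftCoset_iff] at hyw
    simpa using P.mul_mem hyw (P.inv_mem hyP)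

end CoxeterSystem

theorem distinct_reflections_distinct_cosets_general
    {B W : Type*} [Group W] {M : CoxeterMatrix B} (cs : CoxeterSystem M W)
    (J : Set B) (t₁ t₂ : W)
    (ht₁ : cs.IsReflection t₁) (ht₂ : cs.IsReflection t₂)
    (ht₁J : t₁ ∉ Subgroup.closure (cs.simple '' J))
    (hne : t₁ ≠ t₂) :
    t₁ • (Subgroup.closure (cs.simple '' J) : Set W) ≠
      t₂ • (Subgroup.closure (cs.simple '' J) : Set W) := fun hcoset ↦
  hne <| cs.subsingleton_isReflection_inter_leftCoset ht₁J ⟨ht₁, mem_own_leftCoset _ _⟩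
    ⟨ht₂, hcoset ▸ mem_own_leftCoset _ _⟩

/-- **Deodhar's lemma.** Let `(W,S)` be a Coxeter system, `T` the set of reflections,
and `J ⊆ S`. Distinct reflections not lying in the standard parabolic subgroup `W_J`
lie in distinct left cosets of `W_J`. -/
theorem distinct_reflections_distinct_cosets
    {B W : Type*} [Group W] {M : CoxeterMatrix B} (cs : CoxeterSystem M W)
    (J : Set B) (t₁ t₂ : W)
    (ht₁ : cs.IsReflection t₁) (ht₂ : cs.IsReflection t₂)
    (ht₁J : t₁ ∉ Subgroup.closure (cs.simple '' J))
    (ht₂J : t₂ ∉ Subgroup.closure (cs.simple '' J))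
    (hne : t₁ ≠ t₂) :
    t₁ • (Subgroup.closure (cs.simple '' J) : Set W) ≠
      t₂ • (Subgroup.closure (cs.simple '' J) : Set W) :=
  distinct_reflections_distinct_cosets_general cs J t₁ t₂ ht₁ ht₂ ht₁J hne
end

section
/- Let (W,S) be a Coxeter system with geometric representation V and invariant bilinear form (·,·). If β₁, β₂ are positive roots with (β₁,β₂) ≤ -1, then the product of reflections s_{β₁} s_{β₂} has infinite order in W. -/
section GeometricRepresentation

variable {B : Type*} [Fintype B] [DecidableEq B]

/-- The matrix of the canonical bilinear form of the geometric representation of a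
Coxeter group: `k s t = -cos (π / m s t)`, where an entry `m s t = 0` of the Coxeter
matrix stands for `∞` (so `k s t = -1` in that case).  In particular `k s s = 1`. -/
noncomputable def cosMatrix (M : CoxeterMatrix B) : Matrix B B ℝ :=
  Matrix.of fun a b => if M a b = 0 then -1 else -Real.cos (Real.pi / (M a b : ℝ))

/-- The canonical invariant symmetric bilinear form on the geometric representation
`V = B → ℝ` of a Coxeter group, with the simple roots `α_s = Pi.single s 1` as an
orthonormal-with-respect-to-`cosMatrix` basis:  `(v, w) = ∑ a b, v a * w b * k a b`. -/
noncomputable def bform (M : CoxeterMatrix B) (v w : B → ℝ) : ℝ :=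
  ∑ a, ∑ b, v a * w b * cosMatrix M a b

variable {W : Type*} [Group W] {M : CoxeterMatrix B}

/-- `IsGeometricRep cs ρ` asserts that the homomorphism `ρ` from `W` to the linear
automorphisms of `V = B → ℝ` is the geometric representation of the Coxeter system
`cs`: each simple reflection acts by `v ↦ v - 2 (v, α_s) α_s`. -/
def IsGeometricRep (cs : CoxeterSystem M W) (ρ : W →* ((B → ℝ) ≃ₗ[ℝ] (B → ℝ))) : Prop :=
  ∀ (i : B) (v : B → ℝ),
    ρ (cs.simple i) v = v - (2 * bform M v (Pi.single i 1)) • (Pi.single i 1 : B → ℝ)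

/-- `β` is a root of the Coxeter system: an element of the orbit `W · {α_s}`. -/
def IsRoot (cs : CoxeterSystem M W) (ρ : W →* ((B → ℝ) ≃ₗ[ℝ] (B → ℝ)))
    (β : B → ℝ) : Prop :=
  ∃ (w : W) (i : B), β = ρ w (Pi.single i 1)

/-- `β` is a positive root: a root all of whose coordinates in the basis of simple
roots are nonnegative. -/
def IsPositiveRoot (cs : CoxeterSystem M W) (ρ : W →* ((B → ℝ) ≃ₗ[ℝ] (B → ℝ)))
    (β : B → ℝ) : Prop :=
  IsRoot cs ρ β ∧ ∀ a, 0 ≤ β a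

/-- `t` is the reflection `s_β` of `W` corresponding to the root `β`:
if `β = w · α_i` then `s_β = w s_i w⁻¹`. -/
def IsReflectionWithRoot (cs : CoxeterSystem M W) (ρ : W →* ((B → ℝ) ≃ₗ[ℝ] (B → ℝ)))
    (t : W) (β : B → ℝ) : Prop :=
  ∃ (w : W) (i : B), t = w * cs.simple i * w⁻¹ ∧ β = ρ w (Pi.single i 1)

end GeometricRepresentation

section Aux

variable {B : Type*} [Fintype B] [DecidableEq B] {W : Type*} [Group W] {M : CoxeterMatrix B}

lemma mul_apply' (f g : (B → ℝ) ≃ₗ[ℝ] (B → ℝ)) (v : B → ℝ) : (f * g) v = f (g v) := rfl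

lemma one_apply' (v : B → ℝ) : (1 : (B → ℝ) ≃ₗ[ℝ] (B → ℝ)) v = v := rfl

lemma cosMatrix_diag (M : CoxeterMatrix B) (i : B) : cosMatrix M i i = 1 := by
  simp [cosMatrix, M.diagonal i]

lemma cosMatrix_symm' (M : CoxeterMatrix B) (a b : B) : cosMatrix M a b = cosMatrix M b a := by
  simp [cosMatrix, M.symmetric a b]

lemma bform_symm (v w : B → ℝ) : bform M v w = bform M w v := by
  rw [bform, bform, Finset.sum_comm]
  apply Finset.sum_congr rfl
  intro a _
  apply Finset.sum_congr rfl
  intro b _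
  rw [cosMatrix_symm' M b a]; ring

lemma bform_smul_left (r : ℝ) (v w : B → ℝ) : bform M (r • v) w = r * bform M v w := by
  simp only [bform, Pi.smul_apply, smul_eq_mul, Finset.mul_sum, mul_assoc]

lemma bform_add_left (v v' w : B → ℝ) :
    bform M (v + v') w = bform M v w + bform M v' w := by
  simp only [bform, Pi.add_apply, add_mul, Finset.sum_add_distrib]

lemma bform_sub_left (v v' w : B → ℝ) :
    bform M (v - v') w = bform M v w - bform M v' w := by
  simp only [bform, Pi.sub_apply, sub_mul, Finset.sum_sub_distrib]

lemma bform_smul_right (r : ℝ) (v w : B → ℝ) : bform M v (r • w) = r * bform M v w := by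
  rw [bform_symm, bform_smul_left, bform_symm]

lemma bform_add_right (v w w' : B → ℝ) :
    bform M v (w + w') = bform M v w + bform M v w' := by
  rw [bform_symm, bform_add_left, bform_symm v w, bform_symm v w']

lemma bform_sub_right (v w w' : B → ℝ) :
    bform M v (w - w') = bform M v w - bform M v w' := by
  rw [bform_symm, bform_sub_left, bform_symm v w, bform_symm v w']

lemma bform_zero_left (w : B → ℝ) : bform M 0 w = 0 := by
  simp [bform]

lemma bform_single_single (M : CoxeterMatrix B) (i j : B) :
    bform M (Pi.single i 1) (Pi.single j 1) = cosMatrix M i j := by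
  simp [bform, Pi.single_apply, ite_mul, one_mul, zero_mul, Finset.sum_ite_eq]

lemma bform_single_self (M : CoxeterMatrix B) (i : B) :
    bform M (Pi.single i 1) (Pi.single i 1) = 1 := by
  rw [bform_single_single, cosMatrix_diag]

lemma bform_invariant (cs : CoxeterSystem M W) (ρ : W →* ((B → ℝ) ≃ₗ[ℝ] (B → ℝ)))
    (hρ : IsGeometricRep cs ρ) (w : W) (v u : B → ℝ) :
    bform M (ρ w v) (ρ w u) = bform M v u := by
  revert v u
  refine cs.simple_induction
    (p := fun w => ∀ v u, bform M (ρ w v) (ρ w u) = bform M v u) w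
    (fun i v u => ?_) (fun v u => ?_) (fun w w' h1 h2 v u => ?_)
  · rw [hρ i v, hρ i u]
    simp only [bform_sub_left, bform_sub_right, bform_smul_left, bform_smul_right,
      bform_single_self]
    rw [bform_symm (Pi.single i 1) u]
    ring
  · simp only [map_one, one_apply']
  · rw [map_mul, mul_apply', mul_apply', h1, h2]

lemma refl_formula (cs : CoxeterSystem M W) (ρ : W →* ((B → ℝ) ≃ₗ[ℝ] (B → ℝ)))
    (hρ : IsGeometricRep cs ρ) {t : W} {β : B → ℝ}
    (ht : IsReflectionWithRoot cs ρ t β) (v : B → ℝ) :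
    ρ t v = v - (2 * bform M v β) • β := by
  obtain ⟨w, i, rfl, rfl⟩ := ht
  have hinv : ∀ x : B → ℝ, ρ w (ρ w⁻¹ x) = x := by
    intro x
    rw [← mul_apply', ← map_mul, mul_inv_cancel, map_one, one_apply']
  rw [map_mul, map_mul, mul_apply', mul_apply', hρ i (ρ w⁻¹ v), map_sub, map_smul]
  rw [hinv v]
  congr 2
  have := bform_invariant cs ρ hρ w (ρ w⁻¹ v) (Pi.single i 1)
  rw [hinv v] at this
  rw [← this]

lemma root_norm (cs : CoxeterSystem M W) (ρ : W →* ((B → ℝ) ≃ₗ[ℝ] (B → ℝ)))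
    (hρ : IsGeometricRep cs ρ) {β : B → ℝ} (hβ : IsRoot cs ρ β) :
    bform M β β = 1 := by
  obtain ⟨w, i, rfl⟩ := hβ
  rw [bform_invariant cs ρ hρ, bform_single_self]

end Aux

/-- If `β₁, β₂` are positive roots of a Coxeter system with `(β₁, β₂) ≤ -1`, then the
product of the corresponding reflections `s_{β₁} s_{β₂}` has infinite order. -/
theorem product_of_reflections_infinite_order
    {B W : Type*} [Fintype B] [DecidableEq B] [Group W] {M : CoxeterMatrix B}
    (cs : CoxeterSystem M W) (ρ : W →* ((B → ℝ) ≃ₗ[ℝ] (B → ℝ)))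
    (hρ : IsGeometricRep cs ρ)
    (β₁ β₂ : B → ℝ) (t₁ t₂ : W)
    (hβ₁ : IsPositiveRoot cs ρ β₁) (hβ₂ : IsPositiveRoot cs ρ β₂)
    (ht₁ : IsReflectionWithRoot cs ρ t₁ β₁) (ht₂ : IsReflectionWithRoot cs ρ t₂ β₂)
    (hform : bform M β₁ β₂ ≤ -1) :
    ¬ IsOfFinOrder (t₁ * t₂) := by
  set c : ℝ := bform M β₁ β₂ with hc
  have hc1 : c ≤ -1 := hform
  have n1 : bform M β₁ β₁ = 1 := root_norm cs ρ hρ hβ₁.1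
  have n2 : bform M β₂ β₂ = 1 := root_norm cs ρ hρ hβ₂.1
  have hc21 : bform M β₂ β₁ = c := by rw [hc, bform_symm]
  have h1 := refl_formula cs ρ hρ ht₁
  have h2 := refl_formula cs ρ hρ ht₂
  -- linear independence (in the weak form we need)
  have indep : ∀ x y : ℝ, x • β₁ + y • β₂ = 0 → y = 0 := by
    intro x y h
    have e1 : x + y * c = 0 := by
      have := congrArg (fun v => bform M v β₁) h
      simpa [bform_add_left, bform_smul_left, n1, hc21, bform_zero_left] using this
    have e2 : x * c + y = 0 := by
      have := congrArg (fun v => bform M v β₂) h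
      simpa [bform_add_left, bform_smul_left, n2, ← hc, bform_zero_left] using this
    by_cases hcm : c = -1
    · rw [hcm] at e1 e2
      have hxy : x = y := by linarith
      subst hxy
      have h' : x • (β₁ + β₂) = 0 := by rw [smul_add]; exact h
      rcases smul_eq_zero.mp h' with h0 | h0
      · exact h0
      · exfalso
        have hz : β₁ = 0 := by
          funext a
          have := congrFun h0 a
          have p1 := hβ₁.2 a
          have p2 := hβ₂.2 a
          simp only [Pi.add_apply, Pi.zero_apply] at this
          simp only [Pi.zero_apply]
          linarith
        rw [hz, bform_zero_left] at n1
        norm_num at n1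
    · have h3 : (c ^ 2 - 1) * y = 0 := by linear_combination c * e1 - e2
      have hne : c ^ 2 - 1 ≠ 0 := by
        have : c < -1 := lt_of_le_of_ne hc1 hcm
        nlinarith
      exact (mul_eq_zero.mp h3).resolve_left hne |>.symm ▸ rfl
  -- the action of t₁ * t₂ on the plane spanned by β₁, β₂
  have step : ∀ a b : ℝ, ρ (t₁ * t₂) (a • β₁ + b • β₂)
      = ((4 * c ^ 2 - 1) * a + 2 * c * b) • β₁ + ((-2 * c) * a - b) • β₂ := by
    intro a b
    rw [map_mul, mul_apply', h2, h1]
    rw [bform_add_left, bform_smul_left, bform_smul_left, ← hc, n2]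
    rw [bform_sub_left, bform_add_left, bform_smul_left, bform_smul_left,
      bform_smul_left, n1, hc21]
    match_scalars <;> ring
  -- the key growth estimate
  have key : ∀ n : ℕ, ∃ a b : ℝ, ρ ((t₁ * t₂) ^ n) β₁ = a • β₁ + b • β₂ ∧
      b + 1 ≤ a ∧ (n : ℝ) * (-2 * c - 1) ≤ b := by
    intro n
    induction n with
    | zero =>
      refine ⟨1, 0, ?_, by norm_num, by norm_num⟩
      simp [one_apply']
    | succ n ih =>
      obtain ⟨a, b, hab, hba, hb⟩ := ih
      have hb0 : 0 ≤ b := le_trans (by nlinarith [Nat.cast_nonneg (α := ℝ) n]) hb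
      refine ⟨(4 * c ^ 2 - 1) * a + 2 * c * b, (-2 * c) * a - b, ?_, ?_, ?_⟩
      · rw [pow_succ', map_mul, mul_apply', hab, step]
      · nlinarith [mul_nonneg (by linarith : (0:ℝ) ≤ -c) (by linarith : (0:ℝ) ≤ -(c+1)),
          mul_nonneg (mul_nonneg (by linarith : (0:ℝ) ≤ -c) (by linarith : (0:ℝ) ≤ -(c+1))) hb0]
      · have hcast : ((n : ℝ) + 1) * (-2 * c - 1) ≤ (-2 * c) * a - b := by
          nlinarith [mul_nonneg (by linarith : (0:ℝ) ≤ -2 * c - 2) hb0,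
            mul_le_mul_of_nonneg_left hb (by linarith : (0:ℝ) ≤ -2 * c - 2)]
        simpa [Nat.cast_succ] using hcast
  -- conclude
  rw [isOfFinOrder_iff_pow_eq_one]
  rintro ⟨n, hn, hpow⟩
  obtain ⟨a, b, hab, hba, hb⟩ := key n
  rw [hpow, map_one, one_apply'] at hab
  have h0 : (a - 1) • β₁ + b • β₂ = 0 := by
    have h' : a • β₁ + b • β₂ - β₁ = 0 := sub_eq_zero.mpr hab.symm
    calc (a - 1) • β₁ + b • β₂ = a • β₁ + b • β₂ - β₁ := by module
    _ = 0 := h'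
  have hb0 : b = 0 := indep _ _ h0
  have hn1 : (1 : ℝ) ≤ (n : ℝ) := by exact_mod_cast hn
  nlinarith
end
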